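/- Let X = [0,∞)^ℕ with metric d(x,y) = Σ_{n=1}^∞ 2^{-n} min(|x_n − y_n|, 1). (i) For each i ∈ ℕ, the map π_i(x) = x_i/(1 + x_i) satisfies: for every ε > 0 and r_0 > e there exists C > 0 (depending on i and ε) such that |π_i(x) − π_i(y)| ≤ C (log(r_0/d(x,y)))^{-ε} for all x ≠ y. (ii) For δ > 0, the Dyson-type potential f(x) = (x_1/(1+x_1)) · Σ_{n=1}^∞ n^{-(2+δ)} x_n/(1+x_n) is well defined and bounded on X, and for every ε with 0 < ε ≤ 1 + δ and every r_0 > e there exists C > 0 such that |f(x) − f(y)| ≤ C (log(r_0/d(x,y)))^{-ε} for all x ≠ y; that is, f ∈ C^{ε log}(X, ℝ). -/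

import Mathlib

/-!
Put `L = log (r₀ / d(x, y)) ≥ 1`, so that `d(x, y) = r₀ e^{-L}`. Since `e^{-cL} ≤ (ε/c)^ε L^{-ε}`
for every `c > 0`, anything exponentially small in `L` is controlled by the logarithmic modulus.
The map `a ↦ a/(1+a)` is 1-Lipschitz and bounded by 1 on `[0,∞)`, and
`min(|x_n − y_n|, 1) ≤ 2^{n+1} d(x, y)`, which gives (i). For (ii), cut the series at `N = ⌈L⌉`:
the first `N` terms contribute at most `2^{N+1} d(x, y) ≤ 4 r₀ e^{-(1 - log 2) L}`, and the tail at
most `Σ_{n>N} n^{-(2+δ)} ≤ N^{-(1+δ)} ≤ L^{-ε}`, which is where `ε ≤ 1 + δ` enters.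
-/

/-- The metric `d(x,y) = Σ_{n≥1} 2⁻ⁿ min(|x_n − y_n|,1)` on `[0,∞)^ℕ`. -/
noncomputable def seqDistR (x y : ℕ → ℝ) : ℝ :=
  ∑' n : ℕ, (1 / 2 : ℝ) ^ (n + 1) * min |x n - y n| 1

open Real Finset

section SeqDist

variable (x y : ℕ → ℝ)

lemma summable_seqDistR_terms :
    Summable fun n : ℕ => (1 / 2 : ℝ) ^ (n + 1) * min |x n - y n| 1 := by
  refine Summable.of_nonneg_of_le (fun n => by positivity) (fun n => ?_)
    (summable_geometric_two.mul_right (1 / 2))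
  calc (1 / 2 : ℝ) ^ (n + 1) * min |x n - y n| 1 ≤ (1 / 2) ^ (n + 1) * 1 := by
        gcongr; exact min_le_right _ _
    _ = (1 / 2) ^ n * (1 / 2) := by ring

lemma seqDistR_le_one : seqDistR x y ≤ 1 := by
  calc seqDistR x y ≤ ∑' n : ℕ, (1 / 2 : ℝ) ^ n * (1 / 2) := by
        refine (summable_seqDistR_terms x y).tsum_le_tsum (fun n => ?_)
          (summable_geometric_two.mul_right _)
        calc (1 / 2 : ℝ) ^ (n + 1) * min |x n - y n| 1 ≤ (1 / 2) ^ (n + 1) * 1 := by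
              gcongr; exact min_le_right _ _
          _ = (1 / 2) ^ n * (1 / 2) := by ring
    _ = 1 := by rw [tsum_mul_right, tsum_geometric_two]; norm_num

variable {x y}

lemma seqDistR_pos (hxy : x ≠ y) : 0 < seqDistR x y := by
  obtain ⟨n, hn⟩ := Function.ne_iff.mp hxy
  refine (summable_seqDistR_terms x y).tsum_pos (fun n => by positivity) n ?_
  have : 0 < |x n - y n| := abs_pos.mpr (sub_ne_zero.mpr hn)
  positivity

lemma min_abs_sub_le_two_pow_mul_seqDistR (n : ℕ) :
    min |x n - y n| 1 ≤ 2 ^ (n + 1) * seqDistR x y := by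
  have h : (1 / 2 : ℝ) ^ (n + 1) * min |x n - y n| 1 ≤ seqDistR x y :=
    (summable_seqDistR_terms x y).le_tsum n (fun j _ => by positivity)
  rwa [one_div, inv_pow, inv_mul_le_iff₀ (by positivity)] at h

end SeqDist

section Logarithmic

lemma one_le_log_div {r t : ℝ} (hr : exp 1 ≤ r) (ht0 : 0 < t) (ht1 : t ≤ 1) :
    1 ≤ log (r / t) := by
  have hr0 : 0 < r := (exp_pos 1).trans_le hr
  rw [le_log_iff_exp_le (by positivity)]
  exact hr.trans (le_div_self hr0.le ht0 ht1)

lemma eq_mul_exp_neg_log_div {r t : ℝ} (hr : 0 < r) (ht : 0 < t) :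
    t = r * exp (-log (r / t)) := by
  rw [exp_neg, exp_log (by positivity)]
  field_simp

lemma exp_neg_mul_le_rpow_neg {c ε L : ℝ} (hc : 0 < c) (hε : 0 < ε) (hL : 0 < L) :
    exp (-(c * L)) ≤ (ε / c) ^ ε * L ^ (-ε) := by
  have hy : c * L / ε ≤ exp (c * L / ε) := by linarith [add_one_le_exp (c * L / ε)]
  have hpow : (c / ε) ^ ε * L ^ ε ≤ exp (c * L) := by
    calc (c / ε) ^ ε * L ^ ε = (c * L / ε) ^ ε := by
          rw [← mul_rpow (by positivity) hL.le]; ring_nf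
      _ ≤ exp (c * L / ε) ^ ε := rpow_le_rpow (by positivity) hy hε.le
      _ = exp (c * L) := by rw [← exp_mul, div_mul_cancel₀ _ hε.ne']
  calc exp (-(c * L)) = ((c / ε) ^ ε * L ^ ε)⁻¹ * ((c / ε) ^ ε * L ^ ε / exp (c * L)) := by
        rw [exp_neg]; field_simp
    _ ≤ ((c / ε) ^ ε * L ^ ε)⁻¹ * 1 := by
        gcongr; exact div_le_one_of_le₀ hpow (exp_pos _).le
    _ = (ε / c) ^ ε * L ^ (-ε) := by
        rw [mul_one, mul_inv, ← inv_rpow (by positivity), inv_div, rpow_neg hL.le]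

end Logarithmic

section DivOneAdd

variable {a b : ℝ}

lemma div_one_add_self_nonneg (ha : 0 ≤ a) : 0 ≤ a / (1 + a) := by positivity

lemma div_one_add_self_le_one (ha : 0 ≤ a) : a / (1 + a) ≤ 1 :=
  (div_le_one (by linarith)).mpr (by linarith)

lemma abs_div_one_add_self_sub_le (ha : 0 ≤ a) (hb : 0 ≤ b) :
    |a / (1 + a) - b / (1 + b)| ≤ min |a - b| 1 := by
  refine le_min ?_ (abs_sub_le_iff.mpr ⟨?_, ?_⟩)
  · have h : a / (1 + a) - b / (1 + b) = (a - b) / ((1 + a) * (1 + b)) := by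
      field_simp; ring
    rw [h, abs_div, abs_of_pos (a := (1 + a) * (1 + b)) (by positivity)]
    exact div_le_self (abs_nonneg _) (by nlinarith)
  · linarith [div_one_add_self_le_one ha, div_one_add_self_nonneg hb]
  · linarith [div_one_add_self_le_one hb, div_one_add_self_nonneg ha]

end DivOneAdd

noncomputable def weightedSum (w x : ℕ → ℝ) : ℝ :=
  ∑' n, w n * (x n / (1 + x n))

section WeightedSum

variable {w x y : ℕ → ℝ}

lemma summable_weightedSum_terms (hw0 : ∀ n, 0 ≤ w n) (hw : Summable w)
    (hx : ∀ n, 0 ≤ x n) :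
    Summable fun n => w n * (x n / (1 + x n)) :=
  hw.of_nonneg_of_le (fun n => mul_nonneg (hw0 n) (div_one_add_self_nonneg (hx n)))
    (fun n => mul_le_of_le_one_right (hw0 n) (div_one_add_self_le_one (hx n)))

lemma summable_mul_min_abs_sub (hw0 : ∀ n, 0 ≤ w n) (hw : Summable w) :
    Summable fun n => w n * min |x n - y n| 1 :=
  hw.of_nonneg_of_le (fun n => mul_nonneg (hw0 n) (by positivity))
    (fun n => mul_le_of_le_one_right (hw0 n) (min_le_right _ _))

lemma abs_weightedSum_le (hw0 : ∀ n, 0 ≤ w n) (hw : Summable w) (hx : ∀ n, 0 ≤ x n) :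
    |weightedSum w x| ≤ ∑' n, w n := by
  have hterm : ∀ n, 0 ≤ w n * (x n / (1 + x n)) :=
    fun n => mul_nonneg (hw0 n) (div_one_add_self_nonneg (hx n))
  rw [weightedSum, abs_of_nonneg (tsum_nonneg hterm)]
  exact (summable_weightedSum_terms hw0 hw hx).tsum_le_tsum
    (fun n => mul_le_of_le_one_right (hw0 n) (div_one_add_self_le_one (hx n))) hw

lemma abs_weightedSum_sub_le (hw0 : ∀ n, 0 ≤ w n) (hw : Summable w) (hx : ∀ n, 0 ≤ x n)
    (hy : ∀ n, 0 ≤ y n) :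
    |weightedSum w x - weightedSum w y| ≤ ∑' n, w n * min |x n - y n| 1 := by
  have hterm : ∀ n, |w n * (x n / (1 + x n)) - w n * (y n / (1 + y n))|
      ≤ w n * min |x n - y n| 1 := fun n => by
    rw [← mul_sub, abs_mul, abs_of_nonneg (hw0 n)]
    exact mul_le_mul_of_nonneg_left (abs_div_one_add_self_sub_le (hx n) (hy n)) (hw0 n)
  have hmin := summable_mul_min_abs_sub (x := x) (y := y) hw0 hw
  set d := fun n => w n * (x n / (1 + x n)) - w n * (y n / (1 + y n))
  have habs : Summable fun n => ‖d n‖ := hmin.of_nonneg_of_le (fun _ => norm_nonneg _) hterm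
  calc |weightedSum w x - weightedSum w y| = ‖∑' n, d n‖ := by
        rw [weightedSum, weightedSum, ← (summable_weightedSum_terms hw0 hw hx).tsum_sub
          (summable_weightedSum_terms hw0 hw hy), Real.norm_eq_abs]
    _ ≤ ∑' n, ‖d n‖ := norm_tsum_le_tsum_norm habs
    _ ≤ ∑' n, w n * min |x n - y n| 1 := habs.tsum_le_tsum hterm hmin

lemma tsum_mul_min_abs_sub_le (hw0 : ∀ n, 0 ≤ w n) (hw : Summable w) (hw1 : ∀ n, w n ≤ 1)
    (N : ℕ) :
    ∑' n, w n * min |x n - y n| 1 ≤ 2 ^ (N + 1) * seqDistR x y + ∑' n, w (n + N) := by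
  have hgeom : ∀ N : ℕ, ∑ n ∈ range N, (2 : ℝ) ^ (n + 1) ≤ 2 ^ (N + 1) := fun N => by
    induction N with
    | zero => norm_num
    | succ N ih => rw [sum_range_succ, pow_succ _ (N + 1)]; linarith
  have hhead : ∑ n ∈ range N, w n * min |x n - y n| 1 ≤ 2 ^ (N + 1) * seqDistR x y :=
    calc ∑ n ∈ range N, w n * min |x n - y n| 1
        ≤ ∑ n ∈ range N, (2 : ℝ) ^ (n + 1) * seqDistR x y :=
          sum_le_sum fun n _ => (mul_le_of_le_one_left (by positivity) (hw1 n)).trans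
            (min_abs_sub_le_two_pow_mul_seqDistR n)
      _ ≤ 2 ^ (N + 1) * seqDistR x y := by
          rw [← sum_mul]
          exact mul_le_mul_of_nonneg_right (hgeom N) (tsum_nonneg fun n => by positivity)
  have htail : ∑' n, w (n + N) * min |x (n + N) - y (n + N)| 1 ≤ ∑' n, w (n + N) :=
    ((summable_nat_add_iff N).mpr (summable_mul_min_abs_sub hw0 hw)).tsum_le_tsum
      (fun n => mul_le_of_le_one_right (hw0 _) (min_le_right _ _))
      ((summable_nat_add_iff N).mpr hw)
  rw [← (summable_mul_min_abs_sub hw0 hw).sum_add_tsum_nat_add N]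
  exact add_le_add hhead htail

lemma abs_mul_weightedSum_sub_le (hw0 : ∀ n, 0 ≤ w n) (hw : Summable w) (hw1 : ∀ n, w n ≤ 1)
    (hx : ∀ n, 0 ≤ x n) (hy : ∀ n, 0 ≤ y n) (N : ℕ) :
    |x 0 / (1 + x 0) * weightedSum w x - y 0 / (1 + y 0) * weightedSum w y|
      ≤ (2 * ∑' n, w n + 2 ^ (N + 1)) * seqDistR x y + ∑' n, w (n + N) := by
  have h0 : |x 0 / (1 + x 0) - y 0 / (1 + y 0)| ≤ 2 * seqDistR x y :=
    (abs_div_one_add_self_sub_le (hx 0) (hy 0)).trans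
      ((min_abs_sub_le_two_pow_mul_seqDistR 0).trans_eq (by norm_num))
  have hy0 : |y 0 / (1 + y 0)| ≤ 1 := by
    rw [abs_of_nonneg (div_one_add_self_nonneg (hy 0))]; exact div_one_add_self_le_one (hy 0)
  have ht : 0 ≤ seqDistR x y := tsum_nonneg fun n => by positivity
  calc _ = |(x 0 / (1 + x 0) - y 0 / (1 + y 0)) * weightedSum w x
          + y 0 / (1 + y 0) * (weightedSum w x - weightedSum w y)| := by ring_nf
    _ ≤ |x 0 / (1 + x 0) - y 0 / (1 + y 0)| * |weightedSum w x|
          + |y 0 / (1 + y 0)| * |weightedSum w x - weightedSum w y| := by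
        rw [← abs_mul, ← abs_mul]; exact abs_add_le _ _
    _ ≤ 2 * seqDistR x y * ∑' n, w n
          + 1 * (2 ^ (N + 1) * seqDistR x y + ∑' n, w (n + N)) := by
        gcongr
        · exact abs_weightedSum_le hw0 hw hx
        · exact (abs_weightedSum_sub_le hw0 hw hx hy).trans (tsum_mul_min_abs_sub_le hw0 hw hw1 N)
    _ = _ := by ring

end WeightedSum

section PSeries

lemma summable_one_add_rpow_neg {p : ℝ} (hp : 1 < p) :
    Summable fun n : ℕ => ((n : ℝ) + 1) ^ (-p) := by
  refine ((summable_one_div_nat_add_rpow 1 p).mpr hp).congr fun n => ?_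
  rw [abs_of_nonneg (by positivity), rpow_neg (by positivity), one_div]

lemma one_add_rpow_neg_two_add_le {δ m N : ℝ} (hδ : 0 ≤ δ) (hN : 0 < N) (hNm : N ≤ m) :
    (m + 1) ^ (-(2 + δ)) ≤ N ^ (-δ) * (m⁻¹ - (m + 1)⁻¹) := by
  have hm : 0 < m := hN.trans_le hNm
  have hsq : (m + 1) ^ (-(2 : ℝ)) ≤ m⁻¹ - (m + 1)⁻¹ := by
    rw [rpow_neg (by positivity), inv_sub_inv hm.ne' (by positivity)]
    norm_cast
    rw [add_sub_cancel_left, one_div]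
    exact inv_anti₀ (by positivity) (by nlinarith)
  rw [neg_add, rpow_add (by positivity), mul_comm]
  exact mul_le_mul (rpow_le_rpow_of_nonpos hN (by linarith) (by linarith)) hsq
    (by positivity) (by positivity)

lemma tsum_one_add_rpow_neg_tail_le {δ : ℝ} (hδ : 0 ≤ δ) {N : ℕ} (hN : 1 ≤ N) :
    ∑' n : ℕ, (((n + N : ℕ) : ℝ) + 1) ^ (-(2 + δ)) ≤ (N : ℝ) ^ (-(1 + δ)) := by
  have hN0 : (0 : ℝ) < N := by exact_mod_cast hN
  set g : ℕ → ℝ := fun n => (((n + N : ℕ) : ℝ))⁻¹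
  have hterm : ∀ n, (((n + N : ℕ) : ℝ) + 1) ^ (-(2 + δ)) ≤ (N : ℝ) ^ (-δ) * (g n - g (n + 1)) :=
    fun n => by
      have := one_add_rpow_neg_two_add_le hδ hN0 (m := ((n + N : ℕ) : ℝ)) (by simp)
      convert this using 3; simp only [g]; push_cast; ring
  refine ((summable_nat_add_iff N).mpr (summable_one_add_rpow_neg (p := 2 + δ) (by linarith))
    |>.tsum_le_of_sum_range_le fun M => ?_)
  calc _ ≤ ∑ n ∈ range M, (N : ℝ) ^ (-δ) * (g n - g (n + 1)) := sum_le_sum fun n _ => hterm n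
    _ = (N : ℝ) ^ (-δ) * (g 0 - g M) := by rw [← mul_sum, sum_range_sub']
    _ ≤ (N : ℝ) ^ (-δ) * g 0 := by
        gcongr; exact sub_le_self _ (by positivity)
    _ = (N : ℝ) ^ (-(1 + δ)) := by
        rw [neg_add, rpow_add hN0, rpow_neg_one, mul_comm]; simp [g]

end PSeries

lemma two_pow_ceil_mul_exp_neg_le {L : ℝ} (hL : 0 ≤ L) :
    (2 : ℝ) ^ (⌈L⌉₊ + 1) * exp (-L) ≤ 4 * exp (-((1 - log 2) * L)) := by
  have hceil : (2 : ℝ) ^ ⌈L⌉₊ ≤ 2 ^ (L + 1) := by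
    rw [← rpow_natCast]
    exact rpow_le_rpow_of_exponent_le (by norm_num) (Nat.ceil_lt_add_one hL).le
  have hexp : exp (log 2 * L) * exp (-L) = exp (-((1 - log 2) * L)) := by
    rw [← exp_add]; ring_nf
  calc (2 : ℝ) ^ (⌈L⌉₊ + 1) * exp (-L) ≤ 2 * 2 ^ (L + 1) * exp (-L) := by
        rw [pow_succ']; gcongr
    _ = 4 * exp (-((1 - log 2) * L)) := by
        rw [rpow_add two_pos, rpow_one, rpow_def_of_pos two_pos, ← hexp]; ring

theorem exists_abs_div_one_add_sub_le_log_modulus (i : ℕ) {ε r0 : ℝ} (hε : 0 < ε)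
    (hr0 : exp 1 < r0) :
    ∃ C > (0 : ℝ), ∀ x y : ℕ → ℝ, (∀ n, 0 ≤ x n) → (∀ n, 0 ≤ y n) → x ≠ y →
      |x i / (1 + x i) - y i / (1 + y i)| ≤ C * log (r0 / seqDistR x y) ^ (-ε) := by
  have hr0pos : 0 < r0 := (exp_pos 1).trans hr0
  refine ⟨2 ^ (i + 1) * r0 * ε ^ ε, by positivity, fun x y hx hy hxy => ?_⟩
  have ht := seqDistR_pos hxy
  have hL := one_le_log_div hr0.le ht (seqDistR_le_one x y)
  have hdecay := exp_neg_mul_le_rpow_neg one_pos hε (by linarith : 0 < log (r0 / seqDistR x y))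
  rw [one_mul, div_one] at hdecay
  calc |x i / (1 + x i) - y i / (1 + y i)| ≤ 2 ^ (i + 1) * seqDistR x y :=
        (abs_div_one_add_self_sub_le (hx i) (hy i)).trans (min_abs_sub_le_two_pow_mul_seqDistR i)
    _ = 2 ^ (i + 1) * r0 * exp (-log (r0 / seqDistR x y)) := by
        rw [mul_assoc, ← eq_mul_exp_neg_log_div hr0pos ht]
    _ ≤ 2 ^ (i + 1) * r0 * (ε ^ ε * log (r0 / seqDistR x y) ^ (-ε)) := by gcongr
    _ = _ := by ring

/-- The paper's weight `n^{-(2+δ)}`, `n ≥ 1`, reindexed from `n = 0` as in the statement. -/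
noncomputable def dysonWeight (δ : ℝ) (n : ℕ) : ℝ := ((n : ℝ) + 1) ^ (-(2 + δ))

section DysonWeight

variable {δ : ℝ}

lemma dysonWeight_nonneg (n : ℕ) : 0 ≤ dysonWeight δ n := by
  unfold dysonWeight; positivity

lemma dysonWeight_le_one (hδ : 0 ≤ δ) (n : ℕ) : dysonWeight δ n ≤ 1 :=
  rpow_le_one_of_one_le_of_nonpos (by simp) (by linarith)

lemma summable_dysonWeight (hδ : 0 < δ) : Summable (dysonWeight δ) :=
  summable_one_add_rpow_neg (by linarith)

theorem exists_abs_mul_weightedSum_dysonWeight_sub_le_log_modulus (hδ : 0 < δ) {ε r0 : ℝ}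
    (hε : 0 < ε) (hεδ : ε ≤ 1 + δ) (hr0 : exp 1 < r0) :
    ∃ C > (0 : ℝ), ∀ x y : ℕ → ℝ, (∀ n, 0 ≤ x n) → (∀ n, 0 ≤ y n) → x ≠ y →
      |x 0 / (1 + x 0) * weightedSum (dysonWeight δ) x
          - y 0 / (1 + y 0) * weightedSum (dysonWeight δ) y|
        ≤ C * log (r0 / seqDistR x y) ^ (-ε) := by
  have hr0pos : 0 < r0 := (exp_pos 1).trans hr0
  have hc : 0 < 1 - log 2 := by linarith [log_two_lt_d9]
  set A := ∑' n, dysonWeight δ n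
  have hA : 0 ≤ A := tsum_nonneg dysonWeight_nonneg
  set K := (ε / (1 - log 2)) ^ ε
  refine ⟨(2 * A + 4) * r0 * K + 1, by positivity, fun x y hx hy hxy => ?_⟩
  have ht := seqDistR_pos hxy
  set L := log (r0 / seqDistR x y)
  have hL : 1 ≤ L := one_le_log_div hr0.le ht (seqDistR_le_one x y)
  have hLN : L ≤ ⌈L⌉₊ := Nat.le_ceil L
  have hexp : exp (-L) ≤ exp (-((1 - log 2) * L)) := by gcongr; nlinarith [log_two_gt_d9]
  have hhead : (2 * A + 2 ^ (⌈L⌉₊ + 1)) * seqDistR x y ≤ (2 * A + 4) * r0 * K * L ^ (-ε) :=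
    calc (2 * A + 2 ^ (⌈L⌉₊ + 1)) * seqDistR x y
        = r0 * (2 * A * exp (-L) + 2 ^ (⌈L⌉₊ + 1) * exp (-L)) := by
          rw [eq_mul_exp_neg_log_div hr0pos ht]; ring
      _ ≤ r0 * (2 * A * exp (-((1 - log 2) * L)) + 4 * exp (-((1 - log 2) * L))) := by
          gcongr _ * (_ * ?_ + ?_)
          exact two_pow_ceil_mul_exp_neg_le (by linarith)
      _ ≤ r0 * ((2 * A + 4) * (K * L ^ (-ε))) := by
          rw [← add_mul]; gcongr; exact exp_neg_mul_le_rpow_neg (L := L) hc hε (by linarith)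
      _ = _ := by ring
  have htail : ∑' n, dysonWeight δ (n + ⌈L⌉₊) ≤ L ^ (-ε) :=
    calc ∑' n, dysonWeight δ (n + ⌈L⌉₊) ≤ (⌈L⌉₊ : ℝ) ^ (-(1 + δ)) := by
          simpa only [dysonWeight, Nat.cast_add] using
            tsum_one_add_rpow_neg_tail_le hδ.le (Nat.one_le_ceil_iff.mpr (by linarith))
      _ ≤ L ^ (-(1 + δ)) := rpow_le_rpow_of_nonpos (by linarith) hLN (by linarith)
      _ ≤ L ^ (-ε) := rpow_le_rpow_of_exponent_le hL (by linarith)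
  calc _ ≤ (2 * A + 2 ^ (⌈L⌉₊ + 1)) * seqDistR x y + ∑' n, dysonWeight δ (n + ⌈L⌉₊) :=
        abs_mul_weightedSum_sub_le dysonWeight_nonneg (summable_dysonWeight hδ)
          (dysonWeight_le_one hδ.le) hx hy _
    _ ≤ _ := by linarith

end DysonWeight

/-- The coordinate maps `x ↦ x_i/(1+x_i)` and the adapted Dyson-type potential
on `[0,∞)^ℕ` belong to the generalized Hölder spaces `C^{ε log}`. -/
theorem stmt_19
    (δ : ℝ) (hδ : 0 < δ)
    (f : (ℕ → ℝ) → ℝ)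
    (hf : ∀ x : ℕ → ℝ, f x = (x 0 / (1 + x 0)) *
      ∑' n : ℕ, ((n : ℝ) + 1) ^ (-((2 : ℝ) + δ)) * (x n / (1 + x n))) :
    (∀ i : ℕ, ∀ ε : ℝ, 0 < ε → ∀ r0 : ℝ, Real.exp 1 < r0 →
      ∃ C > (0 : ℝ), ∀ x y : ℕ → ℝ, (∀ n, 0 ≤ x n) → (∀ n, 0 ≤ y n) → x ≠ y →
        |x i / (1 + x i) - y i / (1 + y i)|
          ≤ C * (Real.log (r0 / seqDistR x y)) ^ (-ε)) ∧
    (∀ x : ℕ → ℝ, (∀ n, 0 ≤ x n) →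
      Summable fun n : ℕ => ((n : ℝ) + 1) ^ (-((2 : ℝ) + δ)) * (x n / (1 + x n))) ∧
    (∃ M : ℝ, ∀ x : ℕ → ℝ, (∀ n, 0 ≤ x n) → |f x| ≤ M) ∧
    (∀ ε : ℝ, 0 < ε → ε ≤ 1 + δ → ∀ r0 : ℝ, Real.exp 1 < r0 →
      ∃ C > (0 : ℝ), ∀ x y : ℕ → ℝ, (∀ n, 0 ≤ x n) → (∀ n, 0 ≤ y n) → x ≠ y →
        |f x - f y| ≤ C * (Real.log (r0 / seqDistR x y)) ^ (-ε)) := by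
  have hf' : ∀ x, f x = x 0 / (1 + x 0) * weightedSum (dysonWeight δ) x := hf
  refine ⟨fun i ε hε r0 hr0 => exists_abs_div_one_add_sub_le_log_modulus i hε hr0,
    fun x hx => summable_weightedSum_terms dysonWeight_nonneg (summable_dysonWeight hδ) hx,
    ⟨∑' n, dysonWeight δ n, fun x hx => ?_⟩, fun ε hε hεδ r0 hr0 => ?_⟩
  · rw [hf', abs_mul, ← one_mul (∑' n, dysonWeight δ n)]
    exact mul_le_mul
      (abs_le.mpr ⟨by linarith [div_one_add_self_nonneg (hx 0)], div_one_add_self_le_one (hx 0)⟩)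
      (abs_weightedSum_le dysonWeight_nonneg (summable_dysonWeight hδ) hx)
      (abs_nonneg _) zero_le_one
  · obtain ⟨C, hC, hbound⟩ :=
      exists_abs_mul_weightedSum_dysonWeight_sub_le_log_modulus hδ hε hεδ hr0
    exact ⟨C, hC, fun x y hx hy hxy => by rw [hf', hf']; exact hbound x y hx hy hxy⟩
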